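/- arXiv:1706.01813 — 3 statements merged into one kernel-verified Lean document; each statement's English description precedes it below -/
import Mathlib

section
/- Let k > 0, μ̄ > 0, r > 0, and let V₀ := μ̄/r - μ̄/(r+k) ≥ 0 (the value at the point (0,0)). Define g(μ) = e^{-r τ_0(μ)} V₀ - x_b(μ) for μ < 0, where τ_0(μ) = ln(μ̄/(μ̄-μ))/(-k) and x_b(μ) = (μ̄/k) ln((μ̄-μ)/μ̄) - μ/k. Then g is continuous and strictly increasing on (-∞,0), g(μ) → -∞ as μ → -∞, and g(μ) → V₀ ≥ 0 as μ → 0⁻. Hence if V₀ > 0 there exists a unique μ* < 0 with g(μ*) = 0. -/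
/-!
Put `ℓ(μ) = log ((μ̄ - μ) / μ̄)`, which decreases strictly from `+∞` to `0` on `(-∞, 0]`.
Then `e^{-r τ₀(μ)} = e^{-(r/k) ℓ(μ)}` and `x_b(μ) = (μ̄ ℓ(μ) - μ) / k`, so the discounted value
`e^{-r τ₀} V₀` is increasing and tends to `0` at `-∞`, while the waiting cost `x_b` is strictly decreasing and
tends to `+∞` at `-∞`. Hence `g` is strictly increasing with `g → -∞` at `-∞`, and `g` is
continuous up to `0` with `g(0) = V₀`. When `V₀ > 0`, the intermediate value theorem on `(-∞, 0)`
gives a zero, unique by strict monotonicity.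
-/

open Filter Set Topology

theorem StrictMonoOn.existsUnique_eq_of_tendsto_Iio {X α : Type*}
    [ConditionallyCompleteLinearOrder X] [TopologicalSpace X] [OrderTopology X]
    [DenselyOrdered X] [NoMinOrder X] [LinearOrder α] [TopologicalSpace α]
    [OrderClosedTopology α] {f : X → α} {a : X} {L c : α}
    (hmono : StrictMonoOn f (Iio a)) (hf : ContinuousOn f (Iio a))
    (hbot : Tendsto f atBot atBot) (hlim : Tendsto f (𝓝[<] a) (𝓝 L)) (hc : c < L) :
    ∃! x, x < a ∧ f x = c := by
  obtain ⟨x, hxa, hfx⟩ := isPreconnected_Iio.intermediate_value_Iio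
    (le_principal_iff.2 (Iio_mem_atBot a)) (le_principal_iff.2 self_mem_nhdsWithin) hf hbot hlim hc
  exact ⟨x, ⟨hxa, hfx⟩, fun y ⟨hya, hfy⟩ => hmono.injOn hya hxa (hfy.trans hfx.symm)⟩

namespace LiquidationThreshold

noncomputable section

/- The paper's `V₀`, `τ₀(μ)`, `x_b(μ)` and `g(μ)`. -/

def pointValue (k μbar r : ℝ) : ℝ := μbar / r - μbar / (r + k)

def hittingTime (k μbar μ : ℝ) : ℝ := Real.log (μbar / (μbar - μ)) / (-k)

def waitingCost (k μbar μ : ℝ) : ℝ := (μbar / k) * Real.log ((μbar - μ) / μbar) - μ / k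

def gap (k μbar r μ : ℝ) : ℝ :=
  Real.exp (-r * hittingTime k μbar μ) * pointValue k μbar r - waitingCost k μbar μ

end

variable {k μbar r : ℝ}

theorem pointValue_nonneg (hk : 0 ≤ k) (hμbar : 0 ≤ μbar) (hr : 0 < r) :
    0 ≤ pointValue k μbar r :=
  sub_nonneg.2 (div_le_div_of_nonneg_left hμbar hr (le_add_of_nonneg_right hk))

theorem neg_mul_hittingTime (μ : ℝ) :
    -r * hittingTime k μbar μ = -(r / k) * Real.log ((μbar - μ) / μbar) := by
  rw [hittingTime, ← inv_div (μbar - μ), Real.log_inv]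
  ring

theorem strictAntiOn_log_sub_div (hμbar : 0 < μbar) :
    StrictAntiOn (fun μ => Real.log ((μbar - μ) / μbar)) (Iio μbar) := fun _ _ _ hb hab =>
  Real.log_lt_log (div_pos (sub_pos.2 hb) hμbar) (by gcongr)

theorem tendsto_log_sub_div_atBot (hμbar : 0 < μbar) :
    Tendsto (fun μ => Real.log ((μbar - μ) / μbar)) atBot atTop :=
  Real.tendsto_log_atTop.comp
    ((tendsto_atTop_add_const_left _ μbar tendsto_neg_atBot_atTop).atTop_div_const hμbar)

theorem monotoneOn_discount (hk : 0 ≤ k) (hr : 0 ≤ r) (hμbar : 0 < μbar) :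
    MonotoneOn (fun μ => Real.exp (-r * hittingTime k μbar μ)) (Iio μbar) := by
  intro a ha b hb hab
  simp only [Real.exp_le_exp, neg_mul_hittingTime]
  exact mul_le_mul_of_nonpos_left ((strictAntiOn_log_sub_div hμbar).antitoneOn ha hb hab)
    (neg_nonpos.2 (div_nonneg hr hk))

theorem tendsto_discount_atBot (hk : 0 < k) (hr : 0 < r) (hμbar : 0 < μbar) :
    Tendsto (fun μ => Real.exp (-r * hittingTime k μbar μ)) atBot (𝓝 0) := by
  simp only [neg_mul_hittingTime]
  exact Real.tendsto_exp_atBot.comp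
    ((tendsto_log_sub_div_atBot hμbar).const_mul_atTop_of_neg (neg_neg_of_pos (div_pos hr hk)))

theorem strictAntiOn_waitingCost (hk : 0 < k) (hμbar : 0 < μbar) :
    StrictAntiOn (waitingCost k μbar) (Iio μbar) := by
  intro a ha b hb hab
  have hlog := mul_lt_mul_of_pos_left (strictAntiOn_log_sub_div hμbar ha hb hab) (div_pos hμbar hk)
  have hlin : a / k < b / k := div_lt_div_of_pos_right hab hk
  simp only [waitingCost]
  linarith

theorem tendsto_waitingCost_atBot (hk : 0 < k) (hμbar : 0 < μbar) :
    Tendsto (waitingCost k μbar) atBot atTop := by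
  refine ((tendsto_log_sub_div_atBot hμbar).const_mul_atTop (div_pos hμbar hk)).atTop_add_atTop ?_
  simpa only [neg_div] using tendsto_neg_atBot_atTop.atTop_div_const hk

theorem continuousAt_gap (hμbar : μbar ≠ 0) {μ : ℝ} (hμ : μ ≠ μbar) :
    ContinuousAt (gap k μbar r) μ := by
  have := sub_ne_zero.2 hμ.symm
  unfold gap hittingTime waitingCost
  fun_prop (disch := simp [*])

theorem gap_zero (hμbar : μbar ≠ 0) : gap k μbar r 0 = pointValue k μbar r := by
  simp [gap, hittingTime, waitingCost, div_self hμbar]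

theorem strictMonoOn_gap (hk : 0 < k) (hμbar : 0 < μbar) (hr : 0 < r) :
    StrictMonoOn (gap k μbar r) (Iio μbar) := by
  intro a ha b hb hab
  have hdiscount := mul_le_mul_of_nonneg_right (monotoneOn_discount hk.le hr.le hμbar ha hb hab.le)
    (pointValue_nonneg hk.le hμbar.le hr)
  have hcost := strictAntiOn_waitingCost hk hμbar ha hb hab
  simp only [gap]
  linarith

theorem tendsto_gap_atBot (hk : 0 < k) (hμbar : 0 < μbar) (hr : 0 < r) :
    Tendsto (gap k μbar r) atBot atBot := by
  have := (tendsto_discount_atBot hk hr hμbar).mul_const (pointValue k μbar r)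
  exact (this.add_atBot (tendsto_neg_atTop_atBot.comp (tendsto_waitingCost_atBot hk hμbar))).congr
    fun μ => (sub_eq_add_neg _ _).symm

theorem tendsto_gap_nhdsLT_zero (hμbar : 0 < μbar) :
    Tendsto (gap k μbar r) (𝓝[<] 0) (𝓝 (pointValue k μbar r)) := by
  rw [← gap_zero hμbar.ne']
  exact (continuousAt_gap hμbar.ne' hμbar.ne).continuousWithinAt.tendsto

end LiquidationThreshold

open LiquidationThreshold

/-- Properties of g(μ) = e^{-rτ₀(μ)} V₀ - x_b(μ) on (-∞,0) and existence of a
unique liquidation threshold μ* < 0 with g(μ*) = 0 when V₀ > 0. -/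
theorem liquidation_threshold_deterministic (k μbar r : ℝ)
    (hk : 0 < k) (hμbar : 0 < μbar) (hr : 0 < r) :
    0 ≤ μbar / r - μbar / (r + k) ∧
    ContinuousOn
      (fun μ : ℝ => Real.exp (-r * (Real.log (μbar / (μbar - μ)) / (-k))) *
          (μbar / r - μbar / (r + k)) -
        ((μbar / k) * Real.log ((μbar - μ) / μbar) - μ / k)) (Set.Iio 0) ∧
    StrictMonoOn
      (fun μ : ℝ => Real.exp (-r * (Real.log (μbar / (μbar - μ)) / (-k))) *
          (μbar / r - μbar / (r + k)) -
        ((μbar / k) * Real.log ((μbar - μ) / μbar) - μ / k)) (Set.Iio 0) ∧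
    Tendsto
      (fun μ : ℝ => Real.exp (-r * (Real.log (μbar / (μbar - μ)) / (-k))) *
          (μbar / r - μbar / (r + k)) -
        ((μbar / k) * Real.log ((μbar - μ) / μbar) - μ / k)) atBot atBot ∧
    Tendsto
      (fun μ : ℝ => Real.exp (-r * (Real.log (μbar / (μbar - μ)) / (-k))) *
          (μbar / r - μbar / (r + k)) -
        ((μbar / k) * Real.log ((μbar - μ) / μbar) - μ / k))
      (nhdsWithin 0 (Set.Iio 0)) (nhds (μbar / r - μbar / (r + k))) ∧
    (0 < μbar / r - μbar / (r + k) →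
      ∃! μstar : ℝ, μstar < 0 ∧
        Real.exp (-r * (Real.log (μbar / (μbar - μstar)) / (-k))) *
            (μbar / r - μbar / (r + k)) -
          ((μbar / k) * Real.log ((μbar - μstar) / μbar) - μstar / k) = 0) := by
  have hcont : ContinuousOn (gap k μbar r) (Iio 0) := fun μ hμ =>
    (continuousAt_gap hμbar.ne' (hμ.out.trans hμbar).ne).continuousWithinAt
  have hmono : StrictMonoOn (gap k μbar r) (Iio 0) :=
    (strictMonoOn_gap hk hμbar hr).mono (Iio_subset_Iio hμbar.le)
  have hbot := tendsto_gap_atBot hk hμbar hr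
  have hzero := tendsto_gap_nhdsLT_zero (k := k) (r := r) hμbar
  exact ⟨pointValue_nonneg hk.le hμbar.le hr, hcont, hmono, hbot, hzero,
    hmono.existsUnique_eq_of_tendsto_Iio hcont hbot hzero⟩
end

section
/- Let ĥ ∈ ℝ, γ > 0, and suppose C ≥ 1/(μ-ĥ) - 2f^μ(μ)/σ̃(μ)² for all μ ∈ (ĥ, ĥ+γ), where σ̃ > 0 and f^μ are continuous on (ĥ, ĥ+γ). Define h(μ) = ∫_μ^{ĥ+γ} e^{C(ξ-ĥ)}(ξ-ĥ)^{-1} dξ. Then h is twice differentiable on (ĥ, ĥ+γ) and satisfies the supersolution inequality f^μ(μ) h'(μ) + (σ̃(μ)²/2) h''(μ) ≤ 0 on (ĥ, ĥ+γ). -/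
/-!
With `g ξ = e^{C(ξ-ĥ)} / (ξ-ĥ)` the fundamental theorem of calculus gives `h' = -g` on
`(ĥ, ∞)`, hence `h'' = -g' = -g · (C - 1/(μ-ĥ))`. The supersolution inequality then reads
`-(g/2) · (2 f^μ + σ̃² (C - 1/(μ-ĥ))) ≤ 0`, and the bracket is nonnegative by the hypothesis
on `C` multiplied by `σ̃² > 0`.
-/

open Set Filter Topology

theorem hasDerivAt_intervalIntegral_left_of_continuousOn
    {E : Type*} [NormedAddCommGroup E] [NormedSpace ℝ E] [CompleteSpace E]
    {f : ℝ → E} {s : Set ℝ} {x b : ℝ} (hs : IsOpen s) (hf : ContinuousOn f s)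
    (hxb : uIcc x b ⊆ s) :
    HasDerivAt (fun m => ∫ ξ in m..b, f ξ) (-f x) x := by
  have hx : x ∈ s := hxb left_mem_uIcc
  exact intervalIntegral.integral_hasDerivAt_left ((hf.mono hxb).intervalIntegrable)
    (hf.stronglyMeasurableAtFilter hs x hx) (hf.continuousAt (hs.mem_nhds hx))

noncomputable def barrierKernel (a C ξ : ℝ) : ℝ :=
  Real.exp (C * (ξ - a)) * (ξ - a)⁻¹

theorem hasDerivAt_barrierKernel {a C x : ℝ} (hx : x ≠ a) :
    HasDerivAt (barrierKernel a C) (barrierKernel a C x * (C - (x - a)⁻¹)) x := by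
  have hxa : x - a ≠ 0 := sub_ne_zero.2 hx
  have hexp : HasDerivAt (fun y => Real.exp (C * (y - a))) (Real.exp (C * (x - a)) * C) x := by
    simpa using (((hasDerivAt_id x).sub_const a).const_mul C).exp
  have hinv : HasDerivAt (fun y => (y - a)⁻¹) (-1 / (x - a) ^ 2) x :=
    ((hasDerivAt_id' x).sub_const a).inv hxa
  refine (hexp.mul hinv).congr_deriv ?_
  rw [barrierKernel]
  field_simp
  ring

theorem continuousOn_barrierKernel (a C : ℝ) : ContinuousOn (barrierKernel a C) (Ioi a) :=
  fun _ hx => (hasDerivAt_barrierKernel (ne_of_gt hx)).continuousAt.continuousWithinAt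

noncomputable def barrier (a b C m : ℝ) : ℝ :=
  ∫ ξ in m..b, barrierKernel a C ξ

theorem hasDerivAt_barrier {a b C x : ℝ} (hx : a < x) (hb : a < b) :
    HasDerivAt (barrier a b C) (-barrierKernel a C x) x :=
  hasDerivAt_intervalIntegral_left_of_continuousOn isOpen_Ioi (continuousOn_barrierKernel a C)
    (ordConnected_Ioi.uIcc_subset hx hb)

theorem hasDerivAt_deriv_barrier {a b C x : ℝ} (hx : a < x) (hb : a < b) :
    HasDerivAt (deriv (barrier a b C)) (-(barrierKernel a C x * (C - (x - a)⁻¹))) x := by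
  have hderiv : deriv (barrier a b C) =ᶠ[𝓝 x] fun y => -barrierKernel a C y := by
    filter_upwards [isOpen_Ioi.mem_nhds hx] with y hy
    exact (hasDerivAt_barrier hy hb).deriv
  exact (hasDerivAt_barrierKernel (ne_of_gt hx)).neg.congr_of_eventuallyEq hderiv

theorem supersolution_ineq {K σ f d C : ℝ} (hK : 0 ≤ K) (hσ : σ ≠ 0)
    (hC : 1 / d - 2 * f / σ ^ 2 ≤ C) :
    f * -K + σ ^ 2 / 2 * -(K * (C - d⁻¹)) ≤ 0 := by
  have hσ2 : 0 < σ ^ 2 := by positivity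
  have hbracket : 0 ≤ 2 * f + σ ^ 2 * (C - d⁻¹) := by
    have := mul_le_mul_of_nonneg_left hC hσ2.le
    rw [mul_sub, mul_div_cancel₀ _ hσ2.ne', one_div] at this
    linarith
  linarith [mul_nonneg hK hbracket]

theorem barrier_supersolution_general (γ hhat C : ℝ) (σt fμ : ℝ → ℝ)
    (hσpos : ∀ μ ∈ Set.Ioo hhat (hhat + γ), 0 < σt μ)
    (hC : ∀ μ ∈ Set.Ioo hhat (hhat + γ),
      1 / (μ - hhat) - 2 * fμ μ / (σt μ) ^ 2 ≤ C) :
    ∀ μ ∈ Set.Ioo hhat (hhat + γ),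
      DifferentiableAt ℝ
        (fun m => ∫ ξ in m..(hhat + γ), Real.exp (C * (ξ - hhat)) * (ξ - hhat)⁻¹) μ ∧
      DifferentiableAt ℝ
        (deriv (fun m => ∫ ξ in m..(hhat + γ),
          Real.exp (C * (ξ - hhat)) * (ξ - hhat)⁻¹)) μ ∧
      fμ μ * deriv (fun m => ∫ ξ in m..(hhat + γ),
          Real.exp (C * (ξ - hhat)) * (ξ - hhat)⁻¹) μ +
        (σt μ) ^ 2 / 2 * deriv (deriv (fun m => ∫ ξ in m..(hhat + γ),
          Real.exp (C * (ξ - hhat)) * (ξ - hhat)⁻¹)) μ ≤ 0 := by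
  intro μ hμ
  have hb : hhat < hhat + γ := hμ.1.trans hμ.2
  have h₁ := hasDerivAt_barrier (C := C) hμ.1 hb
  have h₂ := hasDerivAt_deriv_barrier (C := C) hμ.1 hb
  refine ⟨h₁.differentiableAt, h₂.differentiableAt, ?_⟩
  change fμ μ * deriv (barrier hhat (hhat + γ) C) μ +
    σt μ ^ 2 / 2 * deriv (deriv (barrier hhat (hhat + γ) C)) μ ≤ 0
  rw [h₁.deriv, h₂.deriv]
  have hK : 0 ≤ barrierKernel hhat C μ :=
    mul_nonneg (Real.exp_pos _).le (inv_nonneg.2 (sub_pos.2 hμ.1).le)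
  exact supersolution_ineq hK (hσpos μ hμ).ne' (hC μ hμ)

/-- The barrier function h(μ) = ∫_μ^{ĥ+γ} e^{C(ξ-ĥ)}(ξ-ĥ)⁻¹ dξ is twice
differentiable and satisfies f^μ h' + (σ̃²/2) h'' ≤ 0 on (ĥ, ĥ+γ), provided
C ≥ 1/(μ-ĥ) - 2f^μ(μ)/σ̃(μ)² there. -/
theorem barrier_supersolution (γ hhat C : ℝ) (hγ : 0 < γ) (σt fμ : ℝ → ℝ)
    (hσcont : ContinuousOn σt (Set.Ioo hhat (hhat + γ)))
    (hfcont : ContinuousOn fμ (Set.Ioo hhat (hhat + γ)))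
    (hσpos : ∀ μ ∈ Set.Ioo hhat (hhat + γ), 0 < σt μ)
    (hC : ∀ μ ∈ Set.Ioo hhat (hhat + γ),
      1 / (μ - hhat) - 2 * fμ μ / (σt μ) ^ 2 ≤ C) :
    ∀ μ ∈ Set.Ioo hhat (hhat + γ),
      DifferentiableAt ℝ
        (fun m => ∫ ξ in m..(hhat + γ), Real.exp (C * (ξ - hhat)) * (ξ - hhat)⁻¹) μ ∧
      DifferentiableAt ℝ
        (deriv (fun m => ∫ ξ in m..(hhat + γ),
          Real.exp (C * (ξ - hhat)) * (ξ - hhat)⁻¹)) μ ∧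
      fμ μ * deriv (fun m => ∫ ξ in m..(hhat + γ),
          Real.exp (C * (ξ - hhat)) * (ξ - hhat)⁻¹) μ +
        (σt μ) ^ 2 / 2 * deriv (deriv (fun m => ∫ ξ in m..(hhat + γ),
          Real.exp (C * (ξ - hhat)) * (ξ - hhat)⁻¹)) μ ≤ 0 :=
  barrier_supersolution_general γ hhat C σt fμ hσpos hC
end

section
/- Let L¹, L², C: [0,∞) → ℝ with L¹, L² nondecreasing and C continuous, x > 0, and define θ(L) = inf{t : x + C(t) - L(t) < 0}. Then it can happen that θ((L¹+L²)/2) < max{θ(L¹), θ(L²)}; i.e., there exist explicit x, C, L¹, L² witnessing that the map L ↦ θ(L) is not quasi-concave and the set of dividend processes constant after their own ruin time is not convex. -/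
/-!
Take no income (`C = 0`, `x = 1`) and two lump-sum strategies: `L¹` pays `3` at time `1`, `L²`
pays `3` at time `2`, so they ruin at times `1` and `2`. Their average already pays `3/2 > 1` at
time `1`, hence ruins at time `1 < 2`; it keeps paying at time `2`, after its own ruin.
-/

open Set

noncomputable def lumpSum (s a t : ℝ) : ℝ := if s ≤ t then a else 0

theorem lumpSum_of_lt {s a t : ℝ} (h : t < s) : lumpSum s a t = 0 :=
  if_neg h.not_ge

theorem lumpSum_of_le {s a t : ℝ} (h : s ≤ t) : lumpSum s a t = a :=
  if_pos h

theorem lumpSum_nonneg {s a : ℝ} (ha : 0 ≤ a) (t : ℝ) : 0 ≤ lumpSum s a t := by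
  unfold lumpSum
  split_ifs
  exacts [ha, le_rfl]

theorem monotone_lumpSum {s a : ℝ} (ha : 0 ≤ a) : Monotone (lumpSum s a) := by
  intro t t' htt'
  by_cases ht : s ≤ t
  · rw [lumpSum_of_le ht, lumpSum_of_le (ht.trans htt')]
  · rw [lumpSum_of_lt (not_le.mp ht)]
    exact lumpSum_nonneg ha t'

theorem ruinSet_eq_Ici {X : ℝ → ℝ} {s : ℝ} (hs : 0 ≤ s) (hbefore : ∀ t < s, 0 ≤ X t)
    (hafter : ∀ t, s ≤ t → X t < 0) : {t | 0 ≤ t ∧ X t < 0} = Ici s := by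
  ext t
  refine ⟨fun ⟨_, hXt⟩ => not_lt.mp fun hts => (hbefore t hts).not_gt hXt,
    fun hst => ⟨hs.trans hst, hafter t hst⟩⟩

/-- The ruin time L ↦ θ(L) is not quasi-concave: there exist x > 0, a continuous
cash flow C, and nondecreasing strategies L¹, L² whose convex combination ruins
strictly before the later of their two ruin times. -/
theorem ruin_time_not_quasiconcave :
    ∃ (x : ℝ) (C L1 L2 : ℝ → ℝ), 0 < x ∧ Continuous C ∧ C 0 = 0 ∧
      Monotone L1 ∧ Monotone L2 ∧
      {t : ℝ | 0 ≤ t ∧ x + C t - L1 t < 0}.Nonempty ∧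
      {t : ℝ | 0 ≤ t ∧ x + C t - L2 t < 0}.Nonempty ∧
      {t : ℝ | 0 ≤ t ∧ x + C t - (L1 t + L2 t) / 2 < 0}.Nonempty ∧
      sInf {t : ℝ | 0 ≤ t ∧ x + C t - (L1 t + L2 t) / 2 < 0} <
        max (sInf {t : ℝ | 0 ≤ t ∧ x + C t - L1 t < 0})
          (sInf {t : ℝ | 0 ≤ t ∧ x + C t - L2 t < 0}) := by
  refine ⟨1, 0, lumpSum 1 3, lumpSum 2 3, one_pos, continuous_const, rfl,
    monotone_lumpSum (by norm_num), monotone_lumpSum (by norm_num), ?_⟩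
  have ruin₁ : {t : ℝ | 0 ≤ t ∧ 1 + (0 : ℝ → ℝ) t - lumpSum 1 3 t < 0} = Ici 1 :=
    ruinSet_eq_Ici zero_le_one (fun t ht => by simp [lumpSum_of_lt ht])
      (fun t ht => by norm_num [lumpSum_of_le ht])
  have ruin₂ : {t : ℝ | 0 ≤ t ∧ 1 + (0 : ℝ → ℝ) t - lumpSum 2 3 t < 0} = Ici 2 :=
    ruinSet_eq_Ici zero_le_two (fun t ht => by simp [lumpSum_of_lt ht])
      (fun t ht => by norm_num [lumpSum_of_le ht])
  have ruin_avg : {t : ℝ | 0 ≤ t ∧ 1 + (0 : ℝ → ℝ) t - (lumpSum 1 3 t + lumpSum 2 3 t) / 2 < 0}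
      = Ici 1 := by
    refine ruinSet_eq_Ici zero_le_one
      (fun t ht => by simp [lumpSum_of_lt ht, lumpSum_of_lt (ht.trans one_lt_two)])
      (fun t ht => ?_)
    have hL₂ := lumpSum_nonneg (s := 2) (by norm_num : (0 : ℝ) ≤ 3) t
    rw [lumpSum_of_le ht, Pi.zero_apply]
    linarith
  rw [ruin₁, ruin₂, ruin_avg, csInf_Ici, csInf_Ici]
  exact ⟨nonempty_Ici, nonempty_Ici, nonempty_Ici, by norm_num⟩
end
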